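/- arXiv:math/0309261 — 7 statements merged into one kernel-verified Lean document; each statement's English description precedes it below -/
import Mathlib

section
/- Assume φ₀ : P → I is a linear isomorphism. Then the pair of sequences (z_in, z_out) satisfies the linear model equations for every k ≥ 0 if and only if for every k ≥ 0 the output satisfies the recursion z_out(k) = (−φ₀)⁻¹ ( ∑_{μ=0}^∞ [ (φ_μ + ψ_μ ∘ nb)(z_in(k−μ)) + (φ_{μ+1} + ψ_μ ∘ nb)(z_out(k−1−μ)) ] ), where all sums are finite because the operator families are finitely supported and the sequences vanish for negative arguments. (Theorem 1 of the paper.) -/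
/-- **Theorem 1** (Hein, "Dual Scattering Channel Schemes Extending the Johns
Algorithm").  Discrete DSC setting: `P`, `I` real vector spaces, `nb` the
node-boundary involution, `φ ψ : ℕ → (P →ₗ[ℝ] I)` finitely supported operator
families, and `z_in, z_out : ℤ → P` vanishing for negative arguments.
If `φ 0` is a linear isomorphism (realized by the equivalence `e`), then the
linear model equations hold for every `k ≥ 0` iff the output satisfies the
recursion
`z_out k = (−φ₀)⁻¹ (∑ᶠ μ, (φ μ + ψ μ ∘ nb)(z_in (k−μ)) + (φ (μ+1) + ψ μ ∘ nb)(z_out (k−1−μ)))`. -/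
theorem stmt_0
    {P I : Type*} [AddCommGroup P] [Module ℝ P] [AddCommGroup I] [Module ℝ I]
    (nb : P →ₗ[ℝ] P) (hnb : ∀ x, nb (nb x) = x)
    (φ ψ : ℕ → (P →ₗ[ℝ] I))
    (hφfin : {μ : ℕ | φ μ ≠ 0}.Finite) (hψfin : {μ : ℕ | ψ μ ≠ 0}.Finite)
    (e : P ≃ₗ[ℝ] I) (he : (e : P →ₗ[ℝ] I) = φ 0)
    (z_in z_out : ℤ → P)
    (hin : ∀ k : ℤ, k < 0 → z_in k = 0)
    (hout : ∀ k : ℤ, k < 0 → z_out k = 0) :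
    (∀ k : ℕ,
        (∑ᶠ μ : ℕ,
          (φ μ (z_in ((k : ℤ) - μ) + z_out ((k : ℤ) - μ)) +
            ψ μ (nb (z_in ((k : ℤ) - μ)) + nb (z_out ((k : ℤ) - μ - 1))))) = 0)
    ↔ (∀ k : ℕ,
        z_out (k : ℤ) =
          - e.symm (∑ᶠ μ : ℕ,
            ((φ μ + (ψ μ) ∘ₗ nb) (z_in ((k : ℤ) - μ)) +
              (φ (μ + 1) + (ψ μ) ∘ₗ nb) (z_out ((k : ℤ) - 1 - μ))))) := by
  classical
  -- bound on supports
  obtain ⟨N, hN⟩ : ∃ N : ℕ, ∀ μ ≥ N, φ μ = 0 ∧ ψ μ = 0 := by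
    refine ⟨(hφfin.toFinset ∪ hψfin.toFinset).sup id + 1, fun μ hμ => ?_⟩
    constructor
    · by_contra h
      have : μ ∈ hφfin.toFinset ∪ hψfin.toFinset := by
        simp [hφfin.mem_toFinset, hψfin.mem_toFinset, h]
      have := Finset.le_sup (f := id) this
      simp only [id] at this
      omega
    · by_contra h
      have : μ ∈ hφfin.toFinset ∪ hψfin.toFinset := by
        simp [hφfin.mem_toFinset, hψfin.mem_toFinset, h]
      have := Finset.le_sup (f := id) this
      simp only [id] at this
      omega
  -- key identity
  have key : ∀ k : ℕ,
      (∑ᶠ μ : ℕ,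
          (φ μ (z_in ((k : ℤ) - μ) + z_out ((k : ℤ) - μ)) +
            ψ μ (nb (z_in ((k : ℤ) - μ)) + nb (z_out ((k : ℤ) - μ - 1))))) =
      φ 0 (z_out (k : ℤ)) +
      (∑ᶠ μ : ℕ,
            ((φ μ + (ψ μ) ∘ₗ nb) (z_in ((k : ℤ) - μ)) +
              (φ (μ + 1) + (ψ μ) ∘ₗ nb) (z_out ((k : ℤ) - 1 - μ)))) := by
    intro k
    have h1 : (∑ᶠ μ : ℕ,
          (φ μ (z_in ((k : ℤ) - μ) + z_out ((k : ℤ) - μ)) +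
            ψ μ (nb (z_in ((k : ℤ) - μ)) + nb (z_out ((k : ℤ) - μ - 1))))) =
        ∑ μ ∈ Finset.range (N + 1),
          (φ μ (z_in ((k : ℤ) - μ) + z_out ((k : ℤ) - μ)) +
            ψ μ (nb (z_in ((k : ℤ) - μ)) + nb (z_out ((k : ℤ) - μ - 1)))) := by
      apply finsum_eq_sum_of_support_subset
      intro μ hμ
      simp only [Function.mem_support] at hμ
      simp only [Finset.coe_range, Set.mem_Iio]
      by_contra h
      push_neg at h
      obtain ⟨h1, h2⟩ := hN μ (by omega)
      simp [h1, h2] at hμ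
    have h2 : (∑ᶠ μ : ℕ,
            ((φ μ + (ψ μ) ∘ₗ nb) (z_in ((k : ℤ) - μ)) +
              (φ (μ + 1) + (ψ μ) ∘ₗ nb) (z_out ((k : ℤ) - 1 - μ)))) =
        ∑ μ ∈ Finset.range (N + 1),
            ((φ μ + (ψ μ) ∘ₗ nb) (z_in ((k : ℤ) - μ)) +
              (φ (μ + 1) + (ψ μ) ∘ₗ nb) (z_out ((k : ℤ) - 1 - μ))) := by
      apply finsum_eq_sum_of_support_subset
      intro μ hμ
      simp only [Function.mem_support] at hμ
      simp only [Finset.coe_range, Set.mem_Iio]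
      by_contra h
      push_neg at h
      obtain ⟨h1, _⟩ := hN μ (by omega)
      obtain ⟨h1', h2'⟩ := hN (μ + 1) (by omega)
      obtain ⟨_, h2⟩ := hN μ (by omega)
      simp [h1, h2, h1'] at hμ
    rw [h1, h2]
    -- shift lemma
    have shift : ∑ μ ∈ Finset.range (N + 1), φ μ (z_out ((k : ℤ) - μ)) =
        φ 0 (z_out (k : ℤ)) +
        ∑ μ ∈ Finset.range (N + 1), φ (μ + 1) (z_out ((k : ℤ) - 1 - μ)) := by
      rw [Finset.sum_range_succ' (fun μ => φ μ (z_out ((k : ℤ) - μ)))]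
      rw [Finset.sum_range_succ (fun μ => φ (μ + 1) (z_out ((k : ℤ) - 1 - μ)))]
      have hz : φ (N + 1) (z_out ((k : ℤ) - 1 - N)) = 0 := by
        rw [(hN (N + 1) (by omega)).1]; simp
      rw [hz]
      simp only [Nat.cast_zero, sub_zero, add_zero]
      rw [add_comm]
      congr 1
      apply Finset.sum_congr rfl
      intro μ _
      congr 1
      push_cast
      ring
    have term_eq : ∀ μ ∈ Finset.range (N + 1),
        (φ μ (z_in ((k : ℤ) - μ) + z_out ((k : ℤ) - μ)) +
            ψ μ (nb (z_in ((k : ℤ) - μ)) + nb (z_out ((k : ℤ) - μ - 1)))) =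
        (((φ μ + (ψ μ) ∘ₗ nb) (z_in ((k : ℤ) - μ)) +
              (φ (μ + 1) + (ψ μ) ∘ₗ nb) (z_out ((k : ℤ) - 1 - μ)))
          + (φ μ (z_out ((k : ℤ) - μ)) - φ (μ + 1) (z_out ((k : ℤ) - 1 - μ)))) := by
      intro μ _
      have : (k : ℤ) - μ - 1 = (k : ℤ) - 1 - μ := by ring
      simp only [map_add, LinearMap.add_apply, LinearMap.comp_apply, this]
      abel
    rw [Finset.sum_congr rfl term_eq, Finset.sum_add_distrib, Finset.sum_sub_distrib,
      shift]
    abel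
  constructor
  · intro H k
    have hk := H k
    rw [key k] at hk
    have : φ 0 (z_out (k : ℤ)) = -(∑ᶠ μ : ℕ,
            ((φ μ + (ψ μ) ∘ₗ nb) (z_in ((k : ℤ) - μ)) +
              (φ (μ + 1) + (ψ μ) ∘ₗ nb) (z_out ((k : ℤ) - 1 - μ)))) := by
      exact eq_neg_of_add_eq_zero_left hk
    rw [← he] at this
    have := congrArg e.symm this
    simpa using this
  · intro H k
    rw [key k]
    have hk := H k
    have : e (z_out (k : ℤ)) = -(∑ᶠ μ : ℕ,
            ((φ μ + (ψ μ) ∘ₗ nb) (z_in ((k : ℤ) - μ)) +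
              (φ (μ + 1) + (ψ μ) ∘ₗ nb) (z_out ((k : ℤ) - 1 - μ)))) := by
      rw [hk]; simp
    rw [← he]
    simp only [LinearEquiv.coe_coe]
    rw [this]
    abel
end

section
/- Assume φ₀ : P → I is a linear isomorphism (the uniqueness condition (U)). Then for every input sequence z_in : ℤ → P vanishing for negative arguments there exists exactly one output sequence z_out : ℤ → P vanishing for negative arguments such that the linear model equations hold for every k ≥ 0; i.e. the condition (U) makes the scheme a well-defined explicit scheme with a unique reflection response. -/
/-!
Since all sequences vanish at negative times, only the terms with `μ ≤ k + 1` of the model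
equation at time `k` survive, and among them `z_out k` enters only through `φ 0 (z_out k)`; every
other term involves the input or earlier outputs. When `φ 0` is invertible the equation at time
`k` can therefore be solved for `z_out k`, so `z_out` is determined, and exists, by recursion
on `k`.
-/

open Finset

section CausalRecursion

def IsCausal {P Q : Type*} (F : ℕ → (ℤ → P) → Q) : Prop :=
  ∀ (n : ℕ) z w, (∀ j : ℤ, j < n → z j = w j) → F n z = F n w

variable {P : Type*} [Zero P]

def extendByZero (f : ℕ → P) : ℤ → P := fun j => if 0 ≤ j then f j.toNat else 0

theorem extendByZero_of_neg (f : ℕ → P) {j : ℤ} (hj : j < 0) : extendByZero f j = 0 :=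
  if_neg (by omega)

@[simp]
theorem extendByZero_natCast (f : ℕ → P) (n : ℕ) : extendByZero f n = f n := by
  simp [extendByZero]

noncomputable def causalSolution (F : ℕ → (ℤ → P) → P) : ℕ → P
  | n => F n (extendByZero fun m => if _ : m < n then causalSolution F m else 0)

theorem causalSolution_eq {F : ℕ → (ℤ → P) → P} (hF : IsCausal F) (n : ℕ) :
    causalSolution F n = F n (extendByZero (causalSolution F)) := by
  rw [causalSolution]
  refine hF n _ _ fun j hj => ?_
  simp only [extendByZero]
  split_ifs <;> first | rfl | omega

theorem eq_of_isCausal {F : ℕ → (ℤ → P) → P} (hF : IsCausal F) {z w : ℤ → P}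
    (hz₀ : ∀ k < 0, z k = 0) (hz : ∀ n : ℕ, z n = F n z)
    (hw₀ : ∀ k < 0, w k = 0) (hw : ∀ n : ℕ, w n = F n w) : z = w := by
  have agree : ∀ n : ℕ, ∀ j : ℤ, j < n → z j = w j := by
    intro n
    induction n with
    | zero => exact fun j hj => (hz₀ j hj).trans (hw₀ j hj).symm
    | succ n ih =>
      intro j hj
      push_cast at hj
      rcases lt_or_eq_of_le (Int.lt_add_one_iff.mp hj) with hj | rfl
      · exact ih j hj
      · rw [hz, hw, hF n z w ih]
  funext j
  exact agree (j.toNat + 1) j (by omega)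

theorem existsUnique_isCausal {F : ℕ → (ℤ → P) → P} (hF : IsCausal F) :
    ∃! z : ℤ → P, (∀ k < 0, z k = 0) ∧ ∀ n : ℕ, z n = F n z :=
  ⟨extendByZero (causalSolution F),
    ⟨fun _ => extendByZero_of_neg _, fun n => by simpa using causalSolution_eq hF n⟩,
    fun _ ⟨hw₀, hw⟩ =>
      eq_of_isCausal hF hw₀ hw (fun _ => extendByZero_of_neg _)
        fun n => by simpa using causalSolution_eq hF n⟩

end CausalRecursion

section ModelEquation

variable {R P I : Type*} [Semiring R] [AddCommGroup P] [Module R P] [AddCommGroup I] [Module R I]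
  (nb : P →ₗ[R] P) (φ ψ : ℕ → P →ₗ[R] I) (z_in : ℤ → P)

def dscTerm (k : ℕ) (z_out : ℤ → P) (μ : ℕ) : I :=
  φ μ (z_in ((k : ℤ) - μ) + z_out ((k : ℤ) - μ)) +
    ψ μ (nb (z_in ((k : ℤ) - μ)) + nb (z_out ((k : ℤ) - μ - 1)))

/-- The model equation at time `k` with the contribution `φ 0 (z_out k)` removed. -/
def dscPast (k : ℕ) (z_out : ℤ → P) : I :=
  φ 0 (z_in k) + ψ 0 (nb (z_in k) + nb (z_out ((k : ℤ) - 1))) +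
    ∑ μ ∈ range (k + 1), dscTerm nb φ ψ z_in k z_out (μ + 1)

theorem isCausal_dscPast : IsCausal (dscPast nb φ ψ z_in) := by
  intro n z w h
  simp only [dscPast, dscTerm]
  rw [h _ (by omega)]
  congr 1
  refine sum_congr rfl fun μ _ => ?_
  rw [h _ (by omega), h _ (by omega)]

variable {nb φ ψ z_in}

theorem finsum_dscTerm_eq (hin : ∀ k : ℤ, k < 0 → z_in k = 0) {z_out : ℤ → P}
    (hout : ∀ k : ℤ, k < 0 → z_out k = 0) (k : ℕ) :
    ∑ᶠ μ, dscTerm nb φ ψ z_in k z_out μ = φ 0 (z_out k) + dscPast nb φ ψ z_in k z_out := by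
  rw [finsum_eq_sum_of_support_subset _ (s := range (k + 2)), sum_range_succ', dscPast]
  · simp only [dscTerm, Nat.cast_zero, sub_zero, map_add]
    abel
  · intro μ hμ
    by_contra hμk
    have hμk : (k : ℤ) - μ < 0 := by simp at hμk; omega
    exact hμ (by simp [dscTerm, hin _ hμk, hout _ hμk,
      hout _ (by omega : (k : ℤ) - μ - 1 < 0)])

end ModelEquation

theorem stmt_1_general
    {P I : Type*} [AddCommGroup P] [Module ℝ P] [AddCommGroup I] [Module ℝ I]
    (nb : P →ₗ[ℝ] P)
    (φ ψ : ℕ → (P →ₗ[ℝ] I))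
    (e : P ≃ₗ[ℝ] I) (he : (e : P →ₗ[ℝ] I) = φ 0)
    (z_in : ℤ → P)
    (hin : ∀ k : ℤ, k < 0 → z_in k = 0) :
    ∃! z_out : ℤ → P,
      (∀ k : ℤ, k < 0 → z_out k = 0) ∧
      (∀ k : ℕ,
        (∑ᶠ μ : ℕ,
          (φ μ (z_in ((k : ℤ) - μ) + z_out ((k : ℤ) - μ)) +
            ψ μ (nb (z_in ((k : ℤ) - μ)) + nb (z_out ((k : ℤ) - μ - 1))))) = 0) := by
  set F : ℕ → (ℤ → P) → P := fun k z => -e.symm (dscPast nb φ ψ z_in k z)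
  have hF : IsCausal F := by
    intro n z w h
    simp only [F, isCausal_dscPast nb φ ψ z_in n z w h]
  have equation_iff : ∀ z : ℤ → P, (∀ k : ℤ, k < 0 → z k = 0) → ∀ k : ℕ,
      ∑ᶠ μ, dscTerm nb φ ψ z_in k z μ = 0 ↔ z k = F k z := by
    intro z hz k
    rw [finsum_dscTerm_eq hin hz, ← he, show F k z = -e.symm _ from rfl, LinearEquiv.coe_coe, ← map_neg, LinearEquiv.eq_symm_apply,
      eq_neg_iff_add_eq_zero]
  exact (existsUnique_congr fun z => and_congr_right fun hz =>
    forall_congr' (equation_iff z hz)).mpr (existsUnique_isCausal hF)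

/-- Uniqueness condition (U): if `φ 0` is a linear isomorphism, then for every
input sequence `z_in` vanishing for negative arguments there is exactly one
output sequence `z_out` vanishing for negative arguments such that the linear
DSC model equations hold for every `k ≥ 0`. -/
theorem stmt_1
    {P I : Type*} [AddCommGroup P] [Module ℝ P] [AddCommGroup I] [Module ℝ I]
    (nb : P →ₗ[ℝ] P) (hnb : ∀ x, nb (nb x) = x)
    (φ ψ : ℕ → (P →ₗ[ℝ] I))
    (hφfin : {μ : ℕ | φ μ ≠ 0}.Finite) (hψfin : {μ : ℕ | ψ μ ≠ 0}.Finite)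
    (e : P ≃ₗ[ℝ] I) (he : (e : P →ₗ[ℝ] I) = φ 0)
    (z_in : ℤ → P)
    (hin : ∀ k : ℤ, k < 0 → z_in k = 0) :
    ∃! z_out : ℤ → P,
      (∀ k : ℤ, k < 0 → z_out k = 0) ∧
      (∀ k : ℕ,
        (∑ᶠ μ : ℕ,
          (φ μ (z_in ((k : ℤ) - μ) + z_out ((k : ℤ) - μ)) +
            ψ μ (nb (z_in ((k : ℤ) - μ)) + nb (z_out ((k : ℤ) - μ - 1))))) = 0) :=
  stmt_1_general nb φ ψ e he z_in hin
end

section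
/- In the first-order case, for every input sequence z_in : ℤ → P vanishing for negative arguments, the unique output sequence z_out vanishing for negative arguments that satisfies the first-order linear model equations for all k ≥ 0 is given explicitly by z_out(k) = K(z_in(k)) + L( ∑_{ν=1}^{k} N^{ν−1}( M(z_in(k−ν)) ) ) for every k ≥ 0. (Corollary 1 of the paper.) -/
private lemma cancel_aux {P I : Type*} [AddCommGroup P] [Module ℝ P] [AddCommGroup I]
    [Module ℝ I] (e : P ≃ₗ[ℝ] I) (x a b : P) (c d : I)
    (h1 : e (x + a) + c + d = 0) (h2 : e (x + b) + c + d = 0) : a = b := by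
  have h3 : e (x + a) = e (x + b) :=
    add_right_cancel (add_right_cancel (h1.trans h2.symm))
  exact add_left_cancel (e.injective h3)

/-- **Corollary 1**: in the first-order case (`φ μ = 0` for `μ ≥ 2`,
`ψ μ = 0` for `μ ≥ 1`, `φ₀` a linear isomorphism realized by `e`), for every
input `z_in` vanishing for negative arguments, a sequence `z_out` vanishing for
negative arguments satisfies the first-order linear model equations for all
`k ≥ 0` iff it is given by
`z_out k = K (z_in k) + L (∑_{ν=1}^{k} N^{ν−1} (M (z_in (k−ν))))`. -/
theorem stmt_2
    {P I : Type*} [AddCommGroup P] [Module ℝ P] [AddCommGroup I] [Module ℝ I]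
    (nb : P →ₗ[ℝ] P) (hnb : ∀ x, nb (nb x) = x)
    (e : P ≃ₗ[ℝ] I) (φ₁ ψ₀ : P →ₗ[ℝ] I)
    (K : P →ₗ[ℝ] P) (L : I →ₗ[ℝ] P) (M : P →ₗ[ℝ] I) (N : I →ₗ[ℝ] I)
    (hK : K = -LinearMap.id - ((e.symm : I →ₗ[ℝ] P) ∘ₗ ψ₀ ∘ₗ nb))
    (hL : L = -(e.symm : I →ₗ[ℝ] P))
    (hM : M = φ₁ + ((φ₁ + ψ₀ ∘ₗ nb) ∘ₗ (-(e.symm : I →ₗ[ℝ] P)) ∘ₗ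
                  ((e : P →ₗ[ℝ] I) + ψ₀ ∘ₗ nb)))
    (hN : N = -((φ₁ + ψ₀ ∘ₗ nb) ∘ₗ (e.symm : I →ₗ[ℝ] P)))
    (z_in z_out : ℤ → P)
    (hin : ∀ k : ℤ, k < 0 → z_in k = 0)
    (hout : ∀ k : ℤ, k < 0 → z_out k = 0) :
    (∀ k : ℕ,
        e (z_in (k : ℤ) + z_out (k : ℤ)) +
          φ₁ (z_in ((k : ℤ) - 1) + z_out ((k : ℤ) - 1)) +
          ψ₀ (nb (z_in (k : ℤ)) + nb (z_out ((k : ℤ) - 1))) = 0)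
    ↔ (∀ k : ℕ,
        z_out (k : ℤ) =
          K (z_in (k : ℤ)) +
            L (∑ ν ∈ Finset.Icc 1 k, (⇑N)^[ν - 1] (M (z_in ((k : ℤ) - ν))))) := by
  -- key algebraic identity
  have key : ∀ (x y : P) (s t : I), t = M y + N s →
      e (x + (K x + L t)) + φ₁ (y + (K y + L s)) + ψ₀ (nb x + nb (K y + L s)) = 0 := by
    intro x y s t ht
    subst hK hL hM hN ht
    simp only [LinearMap.add_apply, LinearMap.neg_apply, LinearMap.comp_apply,
      LinearMap.sub_apply, LinearMap.id_apply, map_sub, LinearEquiv.coe_coe, map_add, map_neg,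
      map_smul, neg_smul, one_smul, LinearEquiv.apply_symm_apply,
      LinearEquiv.symm_apply_apply]
    abel
  -- rewrite of sums over a range
  have h1 : ∀ m : ℕ, ∑ ν ∈ Finset.Icc 1 m, (⇑N)^[ν - 1] (M (z_in ((m : ℤ) - ν)))
      = ∑ j ∈ Finset.range m, (⇑N)^[j] (M (z_in ((m : ℤ) - 1 - j))) := by
    intro m
    rw [← Finset.Ico_add_one_right_eq_Icc, Finset.sum_Ico_eq_sum_range]
    apply Finset.sum_congr (by simp)
    intro j _
    have e1 : 1 + j - 1 = j := by omega
    have e2 : (m : ℤ) - ((1 + j : ℕ) : ℤ) = (m : ℤ) - 1 - j := by push_cast; ring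
    rw [e1, e2]
  -- recurrence for the explicit sum
  have hS : ∀ k : ℕ,
      ∑ ν ∈ Finset.Icc 1 (k + 1), (⇑N)^[ν - 1] (M (z_in (((k + 1 : ℕ) : ℤ) - ν)))
        = M (z_in (k : ℤ)) +
          N (∑ ν ∈ Finset.Icc 1 k, (⇑N)^[ν - 1] (M (z_in ((k : ℤ) - ν)))) := by
    intro k
    rw [h1 (k + 1), h1 k, Finset.sum_range_succ', add_comm]
    congr 1
    · have : ((k + 1 : ℕ) : ℤ) - 1 - ((0 : ℕ) : ℤ) = (k : ℤ) := by push_cast; ring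
      rw [this, Function.iterate_zero_apply]
    · rw [map_sum]
      apply Finset.sum_congr rfl
      intro j _
      rw [Function.iterate_succ_apply']
      have : ((k + 1 : ℕ) : ℤ) - 1 - ((j + 1 : ℕ) : ℤ) = (k : ℤ) - 1 - j := by push_cast; ring
      rw [this]
  -- empty sum at k = 0
  have hs0 : (∑ ν ∈ Finset.Icc 1 0, (⇑N)^[ν - 1] (M (z_in (((0 : ℕ) : ℤ) - ν)))) = (0 : I) := by
    rw [Finset.Icc_eq_empty (by omega), Finset.sum_empty]
  have hz1 : z_in (((0 : ℕ) : ℤ) - 1) = 0 := hin _ (by norm_num)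
  have hz2 : z_out (((0 : ℕ) : ℤ) - 1) = 0 := hout _ (by norm_num)
  have hKL0 : K (z_in (((0 : ℕ) : ℤ) - 1)) + L (0 : I) = z_out (((0 : ℕ) : ℤ) - 1) := by
    rw [hz1, hz2, map_zero, map_zero, add_zero]
  have hkey0 : (0 : I) = M (z_in (((0 : ℕ) : ℤ) - 1)) + N 0 := by
    rw [hz1, map_zero, map_zero, add_zero]
  constructor
  · intro h k
    induction k with
    | zero =>
      have h0 := h 0
      have hk := key (z_in ((0 : ℕ) : ℤ)) (z_in (((0 : ℕ) : ℤ) - 1)) 0 0 hkey0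
      rw [hKL0] at hk
      rw [hs0]
      exact cancel_aux e _ _ _ _ _ h0 hk
    | succ k ih =>
      have h' := h (k + 1)
      have hc : (((k + 1 : ℕ)) : ℤ) - 1 = (k : ℤ) := by push_cast; ring
      rw [hc, ih] at h'
      exact cancel_aux e _ _ _ _ _ h' (key _ _ _ _ (hS k))
  · intro h k
    cases k with
    | zero =>
      have h0 := h 0
      rw [hs0] at h0
      rw [h0, ← hKL0]
      exact key _ _ _ _ hkey0
    | succ k =>
      have hA := h (k + 1)
      have hB := h k
      have hc : (((k + 1 : ℕ)) : ℤ) - 1 = (k : ℤ) := by push_cast; ring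
      rw [hc, hA, hB]
      exact key _ _ _ _ (hS k)
end

section
/- In the first-order case, the response to an incident Dirac pulse is: if z_in(k) = z for k = 0 and z_in(k) = 0 otherwise (z ∈ P fixed), then the unique output sequence z_out vanishing for negative arguments that satisfies the first-order linear model equations for all k ≥ 0 is z_out(0) = K(z) and z_out(k) = L( N^{k−1}( M(z) ) ) for every k ≥ 1. -/
/-- Dirac pulse response in the first-order case: if `z_in 0 = z` and
`z_in k = 0` otherwise, then the unique output vanishing for negative arguments
that solves the first-order linear model equations is `z_out 0 = K z` and
`z_out k = L (N^[k−1] (M z))` for `k ≥ 1`. -/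
theorem stmt_3
    {P I : Type*} [AddCommGroup P] [Module ℝ P] [AddCommGroup I] [Module ℝ I]
    (nb : P →ₗ[ℝ] P) (hnb : ∀ x, nb (nb x) = x)
    (e : P ≃ₗ[ℝ] I) (φ₁ ψ₀ : P →ₗ[ℝ] I)
    (K : P →ₗ[ℝ] P) (L : I →ₗ[ℝ] P) (M : P →ₗ[ℝ] I) (N : I →ₗ[ℝ] I)
    (hK : K = -LinearMap.id - ((e.symm : I →ₗ[ℝ] P) ∘ₗ ψ₀ ∘ₗ nb))
    (hL : L = -(e.symm : I →ₗ[ℝ] P))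
    (hM : M = φ₁ + ((φ₁ + ψ₀ ∘ₗ nb) ∘ₗ (-(e.symm : I →ₗ[ℝ] P)) ∘ₗ
                  ((e : P →ₗ[ℝ] I) + ψ₀ ∘ₗ nb)))
    (hN : N = -((φ₁ + ψ₀ ∘ₗ nb) ∘ₗ (e.symm : I →ₗ[ℝ] P)))
    (z : P) (z_in z_out : ℤ → P)
    (hin : ∀ k : ℤ, z_in k = if k = 0 then z else 0)
    (hout : ∀ k : ℤ, k < 0 → z_out k = 0) :
    (∀ k : ℕ,
        e (z_in (k : ℤ) + z_out (k : ℤ)) +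
          φ₁ (z_in ((k : ℤ) - 1) + z_out ((k : ℤ) - 1)) +
          ψ₀ (nb (z_in (k : ℤ)) + nb (z_out ((k : ℤ) - 1))) = 0)
    ↔ (z_out 0 = K z ∧
        ∀ k : ℕ, 1 ≤ k → z_out (k : ℤ) = L ((⇑N)^[k - 1] (M z))) := by
  have hm1 : z_out (-1) = 0 := hout _ (by norm_num)
  have hin0 : z_in 0 = z := by simp [hin]
  have hinm1 : z_in (-1) = 0 := by simp [hin]
  have hin1 : z_in 1 = 0 := by rw [hin]; norm_num
  have hinp1 : ∀ k : ℕ, z_in ((k : ℤ) + 1) = 0 := by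
    intro k; rw [hin]; simp; omega
  have hinp2 : ∀ k : ℕ, z_in ((k : ℤ) + 2) = 0 := by
    intro k; rw [hin]; simp; omega
  have hKv : ∀ x, K x = -x - e.symm (ψ₀ (nb x)) := by
    intro x; rw [hK]; simp
  have hLv : ∀ v, L v = -(e.symm v) := by
    intro v; rw [hL]; simp
  have hMv : M z = φ₁ z + (φ₁ (K z) + ψ₀ (nb (K z))) := by
    rw [hM, hKv]
    simp only [LinearMap.add_apply, LinearMap.comp_apply, LinearMap.neg_apply,
      LinearEquiv.coe_coe, map_add, map_sub, map_neg, LinearEquiv.symm_apply_apply]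
    abel
  have hNv : ∀ v, N v = -(φ₁ (e.symm v) + ψ₀ (nb (e.symm v))) := by
    intro v; rw [hN]; simp
  constructor
  · intro h
    have hz0 : z_out 0 = K z := by
      have h0 := h 0
      simp only [Nat.cast_zero, zero_sub, hin0, hinm1, hm1, add_zero, map_zero,
        zero_add] at h0
      have hE : e (z_out 0 - K z) = 0 := by
        simp only [hKv, map_sub, map_neg, map_add, LinearEquiv.apply_symm_apply] at h0 ⊢
        rw [← h0]; abel
      exact sub_eq_zero.mp (e.map_eq_zero_iff.mp hE)
    refine ⟨hz0, ?_⟩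
    have key : ∀ k : ℕ, z_out ((k : ℤ) + 1) = L ((⇑N)^[k] (M z)) := by
      intro k
      induction k with
      | zero =>
        have h1 := h 1
        simp only [Nat.cast_one, hin1, hin0, hz0, zero_add, map_zero, add_zero,
          show (1 : ℤ) - 1 = 0 from by ring] at h1
        simp only [Function.iterate_zero, id_eq, Nat.cast_zero, zero_add]
        have hE : e (z_out 1 - L (M z)) = 0 := by
          rw [map_sub, hLv, map_neg, LinearEquiv.apply_symm_apply, hMv]
          simp only [map_add] at h1 ⊢
          rw [← h1]; abel
        exact sub_eq_zero.mp (e.map_eq_zero_iff.mp hE)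
      | succ k ih =>
        have h2 := h (k + 2)
        push_cast at h2
        rw [show (k : ℤ) + 2 - 1 = (k : ℤ) + 1 from by ring, hinp2 k, hinp1 k] at h2
        push_cast
        rw [show (k : ℤ) + 1 + 1 = (k : ℤ) + 2 from by ring,
          Function.iterate_succ_apply']
        set u := (⇑N)^[k] (M z) with hu
        have hE : e (z_out ((k : ℤ) + 2) - L (N u)) = 0 := by
          rw [map_sub, hLv, map_neg, LinearEquiv.apply_symm_apply, hNv]
          rw [ih, hLv] at h2
          simp only [map_neg, map_zero, zero_add, add_zero,
            LinearEquiv.apply_symm_apply] at h2 ⊢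
          rw [← h2]; abel
        exact sub_eq_zero.mp (e.map_eq_zero_iff.mp hE)
    intro k hk
    obtain ⟨j, rfl⟩ : ∃ j, k = j + 1 := ⟨k - 1, by omega⟩
    have := key j
    push_cast
    simpa [Nat.add_sub_cancel] using this
  · rintro ⟨hz0, hrec⟩
    have hstep : ∀ k : ℕ, z_out ((k : ℤ) + 1) = L ((⇑N)^[k] (M z)) := by
      intro k
      have := hrec (k + 1) (by omega)
      push_cast at this
      simpa [Nat.add_sub_cancel] using this
    intro k
    match k with
    | 0 =>
      simp only [Nat.cast_zero, zero_sub, hin0, hinm1, hm1, add_zero, map_zero,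
        zero_add, hz0, hKv]
      simp only [map_add, map_sub, map_neg, LinearEquiv.apply_symm_apply]
      abel
    | 1 =>
      have h1v : z_out 1 = L (M z) := by
        have := hstep 0
        simpa using this
      simp only [Nat.cast_one, show (1 : ℤ) - 1 = 0 from by ring, hin1, hin0,
        hz0, h1v, zero_add, map_zero, add_zero]
      rw [hLv, map_neg, LinearEquiv.apply_symm_apply, hMv]
      simp only [map_add]
      abel
    | (k + 2) =>
      push_cast
      have hs1 := hstep (k + 1)
      push_cast at hs1
      rw [show (k : ℤ) + 2 - 1 = (k : ℤ) + 1 from by ring, hinp2 k, hinp1 k,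
        hstep k, show (k : ℤ) + 2 = (k : ℤ) + 1 + 1 from by ring, hs1]
      rw [Function.iterate_succ_apply', hLv ((⇑N)^[k] (M z)), hLv, hNv]
      simp only [map_neg, map_zero, zero_add, add_zero, map_add,
        LinearEquiv.apply_symm_apply]
      abel
end

section
/- In the first-order Banach-space case (bounded-input/bounded-output stability): if ‖N‖ < 1, z_in : ℤ → P vanishes for negative arguments and satisfies ‖z_in(j)‖ ≤ C for all j, then the output z_out(k) := K(z_in(k)) + L( ∑_{ν=1}^{k} N^{ν−1}( M(z_in(k−ν)) ) ) satisfies ‖z_out(k)‖ ≤ ( ‖K‖ + ‖L‖·‖M‖/(1−‖N‖) )·C for every k ≥ 0; in particular the first-order linear DSC process with ‖N‖ < 1 is stable in the bounded-input bounded-output sense. -/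
lemma iter_norm_le {I : Type*} [NormedAddCommGroup I] [NormedSpace ℝ I]
    (N : I →L[ℝ] I) : ∀ (n : ℕ) (y : I), ‖(⇑N)^[n] y‖ ≤ ‖N‖ ^ n * ‖y‖ := by
  intro n
  induction n with
  | zero => intro y; simp
  | succ n ih =>
    intro y
    rw [Function.iterate_succ_apply']
    calc ‖N ((⇑N)^[n] y)‖ ≤ ‖N‖ * ‖(⇑N)^[n] y‖ := N.le_opNorm _
      _ ≤ ‖N‖ * (‖N‖ ^ n * ‖y‖) :=
        mul_le_mul_of_nonneg_left (ih y) (norm_nonneg N)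
      _ = ‖N‖ ^ (n + 1) * ‖y‖ := by ring

/-- BIBO stability of the first-order DSC process: if `‖N‖ < 1`, `z_in`
vanishes for negative arguments and `‖z_in j‖ ≤ C` for all `j`, then the output
`z_out k = K (z_in k) + L (∑_{ν=1}^{k} N^{ν−1} (M (z_in (k−ν))))` satisfies
`‖z_out k‖ ≤ (‖K‖ + ‖L‖·‖M‖/(1−‖N‖))·C` for every `k ≥ 0`. -/
theorem stmt_6
    {P I : Type*} [NormedAddCommGroup P] [NormedSpace ℝ P] [CompleteSpace P]
    [NormedAddCommGroup I] [NormedSpace ℝ I] [CompleteSpace I]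
    (nb : P →L[ℝ] P) (hnb : ∀ x, nb (nb x) = x)
    (e : P ≃L[ℝ] I) (φ₁ ψ₀ : P →L[ℝ] I)
    (K : P →L[ℝ] P) (L : I →L[ℝ] P) (M : P →L[ℝ] I) (N : I →L[ℝ] I)
    (hK : K = -(ContinuousLinearMap.id ℝ P) -
            ((e.symm : I →L[ℝ] P).comp (ψ₀.comp nb)))
    (hL : L = -(e.symm : I →L[ℝ] P))
    (hM : M = φ₁ + ((φ₁ + ψ₀.comp nb).comp ((-(e.symm : I →L[ℝ] P)).comp
                  ((e : P →L[ℝ] I) + ψ₀.comp nb))))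
    (hN : N = -((φ₁ + ψ₀.comp nb).comp (e.symm : I →L[ℝ] P)))
    (hNlt : ‖N‖ < 1)
    (z_in : ℤ → P) (hin : ∀ k : ℤ, k < 0 → z_in k = 0)
    (C : ℝ) (hC : ∀ j : ℤ, ‖z_in j‖ ≤ C) :
    ∀ k : ℕ,
      ‖K (z_in (k : ℤ)) +
          L (∑ ν ∈ Finset.Icc 1 k, (⇑N)^[ν - 1] (M (z_in ((k : ℤ) - ν))))‖ ≤
        (‖K‖ + ‖L‖ * ‖M‖ / (1 - ‖N‖)) * C := by
  intro k
  have hC0 : 0 ≤ C := le_trans (norm_nonneg _) (hC 0)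
  have hN0 : 0 ≤ ‖N‖ := norm_nonneg N
  have h1 : 0 < 1 - ‖N‖ := by linarith
  -- bound on the sum
  have hsum : ‖∑ ν ∈ Finset.Icc 1 k, (⇑N)^[ν - 1] (M (z_in ((k : ℤ) - ν)))‖ ≤
      ‖M‖ * C / (1 - ‖N‖) := by
    calc ‖∑ ν ∈ Finset.Icc 1 k, (⇑N)^[ν - 1] (M (z_in ((k : ℤ) - ν)))‖
        ≤ ∑ ν ∈ Finset.Icc 1 k, ‖(⇑N)^[ν - 1] (M (z_in ((k : ℤ) - ν)))‖ :=
          norm_sum_le _ _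
      _ ≤ ∑ ν ∈ Finset.Icc 1 k, ‖N‖ ^ (ν - 1) * (‖M‖ * C) := by
          refine Finset.sum_le_sum fun ν _ => ?_
          calc ‖(⇑N)^[ν - 1] (M (z_in ((k : ℤ) - ν)))‖
              ≤ ‖N‖ ^ (ν - 1) * ‖M (z_in ((k : ℤ) - ν))‖ := iter_norm_le N _ _
            _ ≤ ‖N‖ ^ (ν - 1) * (‖M‖ * C) := by
                refine mul_le_mul_of_nonneg_left ?_ (by positivity)
                exact (M.le_opNorm _).trans
                  (mul_le_mul_of_nonneg_left (hC _) (norm_nonneg M))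
      _ = (∑ ν ∈ Finset.Icc 1 k, ‖N‖ ^ (ν - 1)) * (‖M‖ * C) := by
          rw [Finset.sum_mul]
      _ ≤ (1 / (1 - ‖N‖)) * (‖M‖ * C) := by
          refine mul_le_mul_of_nonneg_right ?_ (by positivity)
          have : ∑ ν ∈ Finset.Icc 1 k, ‖N‖ ^ (ν - 1) =
              ∑ i ∈ Finset.range k, ‖N‖ ^ i := by
            rw [← Finset.Ico_add_one_right_eq_Icc, Finset.sum_Ico_eq_sum_range]
            simp
          rw [this]
          calc ∑ i ∈ Finset.range k, ‖N‖ ^ i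
              ≤ ∑' i : ℕ, ‖N‖ ^ i := by
                refine Summable.sum_le_tsum _ (fun i _ => by positivity) ?_
                exact summable_geometric_of_lt_one hN0 hNlt
            _ = (1 - ‖N‖)⁻¹ := tsum_geometric_of_lt_one hN0 hNlt
            _ = 1 / (1 - ‖N‖) := (one_div _).symm
      _ = ‖M‖ * C / (1 - ‖N‖) := by ring
  calc ‖K (z_in (k : ℤ)) +
          L (∑ ν ∈ Finset.Icc 1 k, (⇑N)^[ν - 1] (M (z_in ((k : ℤ) - ν))))‖
      ≤ ‖K (z_in (k : ℤ))‖ +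
          ‖L (∑ ν ∈ Finset.Icc 1 k, (⇑N)^[ν - 1] (M (z_in ((k : ℤ) - ν))))‖ :=
        norm_add_le _ _
    _ ≤ ‖K‖ * C + ‖L‖ * (‖M‖ * C / (1 - ‖N‖)) := by
        refine add_le_add ?_ ?_
        · exact (K.le_opNorm _).trans
            (mul_le_mul_of_nonneg_left (hC _) (norm_nonneg K))
        · exact (L.le_opNorm _).trans
            (mul_le_mul_of_nonneg_left hsum (norm_nonneg L))
    _ = (‖K‖ + ‖L‖ * ‖M‖ / (1 - ‖N‖)) * C := by ring
end

section
/- Deflection formula (Proposition 2): assume φ₀ is a linear isomorphism. Let z_in : ℤ → P vanish for negative arguments, let w_out be the unique output vanishing for negative arguments that solves the unperturbed linear model equations for z_in, and let j : ℕ → I be any sequence of perturbation values. Then an output sequence z_out : ℤ → P vanishing for negative arguments makes the total fields satisfy the perturbed model equations ∑_{μ=0}^∞ ( φ_μ(z^n(k−μ)) + ψ_μ(z^p(k−μ)) ) + j(k) = 0 for every k ≥ 0 if and only if the deflection D := z_out − w_out satisfies, for every k ≥ 0, the recursion φ₀(D(k)) = −j(k) − ∑_{μ=0}^∞ (φ_{μ+1}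 + ψ_μ ∘ nb)(D(k−1−μ)). -/
/-- **Proposition 2** (deflection formula): with `φ 0` a linear isomorphism
(realized by `e`), `w_out` the unique output vanishing for negative arguments
solving the unperturbed linear model equations for `z_in`, and `j : ℕ → I` a
perturbation, an output `z_out` vanishing for negative arguments makes the
total fields satisfy the perturbed model equations iff the deflection
`D := z_out − w_out` satisfies the recursion
`φ₀ (D k) = −j k − ∑ᶠ μ, (φ (μ+1) + ψ μ ∘ nb) (D (k−1−μ))` for every `k ≥ 0`. -/
theorem stmt_9
    {P I : Type*} [AddCommGroup P] [Module ℝ P] [AddCommGroup I] [Module ℝ I]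
    (nb : P →ₗ[ℝ] P) (hnb : ∀ x, nb (nb x) = x)
    (φ ψ : ℕ → (P →ₗ[ℝ] I))
    (hφfin : {μ : ℕ | φ μ ≠ 0}.Finite) (hψfin : {μ : ℕ | ψ μ ≠ 0}.Finite)
    (e : P ≃ₗ[ℝ] I) (he : (e : P →ₗ[ℝ] I) = φ 0)
    (z_in : ℤ → P) (hin : ∀ k : ℤ, k < 0 → z_in k = 0)
    (w_out : ℤ → P) (hwneg : ∀ k : ℤ, k < 0 → w_out k = 0)
    (hw : ∀ k : ℕ,
      (∑ᶠ μ : ℕ,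
        (φ μ (z_in ((k : ℤ) - μ) + w_out ((k : ℤ) - μ)) +
          ψ μ (nb (z_in ((k : ℤ) - μ)) + nb (w_out ((k : ℤ) - μ - 1))))) = 0)
    (j : ℕ → I)
    (z_out : ℤ → P) (hzneg : ∀ k : ℤ, k < 0 → z_out k = 0) :
    (∀ k : ℕ,
        (∑ᶠ μ : ℕ,
          (φ μ (z_in ((k : ℤ) - μ) + z_out ((k : ℤ) - μ)) +
            ψ μ (nb (z_in ((k : ℤ) - μ)) + nb (z_out ((k : ℤ) - μ - 1))))) +
          j k = 0)
    ↔ (∀ k : ℕ,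
        φ 0 (z_out (k : ℤ) - w_out (k : ℤ)) =
          - j k -
            ∑ᶠ μ : ℕ,
              (φ (μ + 1) + (ψ μ) ∘ₗ nb)
                (z_out ((k : ℤ) - 1 - μ) - w_out ((k : ℤ) - 1 - μ))) := by
  classical
  set D : ℤ → P := fun t => z_out t - w_out t with hD
  set N : ℕ := (hφfin.toFinset ∪ hψfin.toFinset).sup id + 1 with hN
  have hbig : ∀ μ : ℕ, N ≤ μ → φ μ = 0 ∧ ψ μ = 0 := by
    intro μ hμ
    constructor <;> by_contra h
    · have : μ ∈ hφfin.toFinset ∪ hψfin.toFinset := by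
        simp [Set.Finite.mem_toFinset, h]
      have := Finset.le_sup (f := id) this
      simp only [id_eq] at this
      omega
    · have : μ ∈ hφfin.toFinset ∪ hψfin.toFinset := by
        simp [Set.Finite.mem_toFinset, h]
      have := Finset.le_sup (f := id) this
      simp only [id_eq] at this
      omega
  have key : ∀ k : ℕ,
      (∑ᶠ μ : ℕ,
          (φ μ (z_in ((k : ℤ) - μ) + z_out ((k : ℤ) - μ)) +
            ψ μ (nb (z_in ((k : ℤ) - μ)) + nb (z_out ((k : ℤ) - μ - 1))))) =
      (∑ᶠ μ : ℕ,
          (φ μ (z_in ((k : ℤ) - μ) + w_out ((k : ℤ) - μ)) +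
            ψ μ (nb (z_in ((k : ℤ) - μ)) + nb (w_out ((k : ℤ) - μ - 1))))) +
      (φ 0 (D (k : ℤ)) +
        ∑ᶠ μ : ℕ, (φ (μ + 1) + (ψ μ) ∘ₗ nb) (D ((k : ℤ) - 1 - μ))) := by
    intro k
    have hsub1 :
        (∑ᶠ μ : ℕ,
            (φ μ (z_in ((k : ℤ) - μ) + z_out ((k : ℤ) - μ)) +
              ψ μ (nb (z_in ((k : ℤ) - μ)) + nb (z_out ((k : ℤ) - μ - 1))))) =
        ∑ μ ∈ Finset.range (N + 1),
            (φ μ (z_in ((k : ℤ) - μ) + z_out ((k : ℤ) - μ)) +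
              ψ μ (nb (z_in ((k : ℤ) - μ)) + nb (z_out ((k : ℤ) - μ - 1)))) := by
      apply finsum_eq_finset_sum_of_support_subset
      intro μ hμ
      simp only [Function.mem_support] at hμ
      by_contra hc
      simp only [Finset.coe_range, Set.mem_Iio, not_lt] at hc
      obtain ⟨h1, h2⟩ := hbig μ (by omega)
      simp [h1, h2] at hμ
    have hsub2 :
        (∑ᶠ μ : ℕ,
            (φ μ (z_in ((k : ℤ) - μ) + w_out ((k : ℤ) - μ)) +
              ψ μ (nb (z_in ((k : ℤ) - μ)) + nb (w_out ((k : ℤ) - μ - 1))))) =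
        ∑ μ ∈ Finset.range (N + 1),
            (φ μ (z_in ((k : ℤ) - μ) + w_out ((k : ℤ) - μ)) +
              ψ μ (nb (z_in ((k : ℤ) - μ)) + nb (w_out ((k : ℤ) - μ - 1)))) := by
      apply finsum_eq_finset_sum_of_support_subset
      intro μ hμ
      simp only [Function.mem_support] at hμ
      by_contra hc
      simp only [Finset.coe_range, Set.mem_Iio, not_lt] at hc
      obtain ⟨h1, h2⟩ := hbig μ (by omega)
      simp [h1, h2] at hμ
    have hsub3 :
        (∑ᶠ μ : ℕ, (φ (μ + 1) + (ψ μ) ∘ₗ nb) (D ((k : ℤ) - 1 - μ))) =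
        ∑ μ ∈ Finset.range N,
            (φ (μ + 1) + (ψ μ) ∘ₗ nb) (D ((k : ℤ) - 1 - μ)) := by
      apply finsum_eq_finset_sum_of_support_subset
      intro μ hμ
      simp only [Function.mem_support] at hμ
      by_contra hc
      simp only [Finset.coe_range, Set.mem_Iio, not_lt] at hc
      obtain ⟨h1, _⟩ := hbig (μ + 1) (by omega)
      obtain ⟨_, h2⟩ := hbig μ (by omega)
      simp [h1, h2] at hμ
    rw [hsub1, hsub2, hsub3]
    have hterm : ∀ μ ∈ Finset.range (N + 1),
        (φ μ (z_in ((k : ℤ) - μ) + z_out ((k : ℤ) - μ)) +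
          ψ μ (nb (z_in ((k : ℤ) - μ)) + nb (z_out ((k : ℤ) - μ - 1)))) =
        ((φ μ (z_in ((k : ℤ) - μ) + w_out ((k : ℤ) - μ)) +
            ψ μ (nb (z_in ((k : ℤ) - μ)) + nb (w_out ((k : ℤ) - μ - 1)))) +
          (φ μ (D ((k : ℤ) - μ)) + ψ μ (nb (D ((k : ℤ) - μ - 1))))) := by
      intro μ _
      simp only [hD, map_add, map_sub]
      abel
    rw [Finset.sum_congr rfl hterm, Finset.sum_add_distrib, Finset.sum_add_distrib]
    congr 1
    -- now: ∑ φμ(D(k-μ)) + ∑ ψμ(nb D(k-μ-1)) = φ0 (D k) + ∑ (φ(μ+1)+ψμ∘nb)(D(k-1-μ))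
    have h1 : ∑ μ ∈ Finset.range (N + 1), φ μ (D ((k : ℤ) - μ)) =
        (∑ μ ∈ Finset.range N, φ (μ + 1) (D ((k : ℤ) - 1 - μ))) + φ 0 (D (k : ℤ)) := by
      rw [Finset.sum_range_succ' (fun μ => φ μ (D ((k : ℤ) - μ))) N]
      simp only [Nat.cast_zero, sub_zero]
      congr 1
      apply Finset.sum_congr rfl
      intro μ _
      have h' : ((k : ℤ) - (μ + 1 : ℕ)) = (k : ℤ) - 1 - μ := by push_cast; ring
      rw [h']
    have h2 : ∑ μ ∈ Finset.range (N + 1), ψ μ (nb (D ((k : ℤ) - μ - 1))) =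
        ∑ μ ∈ Finset.range N, ψ μ (nb (D ((k : ℤ) - 1 - μ))) := by
      rw [Finset.sum_range_succ]
      have : ψ N = 0 := (hbig N le_rfl).2
      rw [this]
      simp only [LinearMap.zero_apply, add_zero]
      apply Finset.sum_congr rfl
      intro μ _
      have h' : ((k : ℤ) - μ - 1) = (k : ℤ) - 1 - μ := by ring
      rw [h']
    rw [Finset.sum_add_distrib, h1, h2]
    simp only [LinearMap.add_apply, LinearMap.coe_comp, Function.comp_apply]
    rw [Finset.sum_add_distrib]
    abel
  constructor
  · intro h k
    have hk := h k
    rw [key k, hw k, zero_add] at hk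
    have : φ 0 (D (k : ℤ)) =
        -((∑ᶠ μ : ℕ, (φ (μ + 1) + (ψ μ) ∘ₗ nb) (D ((k : ℤ) - 1 - μ))) + j k) := by
      rw [eq_neg_iff_add_eq_zero, ← add_assoc]
      exact hk
    rw [this]
    simp only [hD]
    abel
  · intro h k
    rw [key k, hw k, zero_add, h k]
    simp only [hD]
    abel
end

section
/- Deflected processes (Corollary 3): assume φ₀ is a linear isomorphism. Let z_in : ℤ → P vanish for negative arguments, let w_out be the unique output vanishing for negative arguments that solves the unperturbed linear model equations for z_in, and let j : ℕ → I be any sequence of perturbation values. Define D : ℤ → I recursively by D(k) = 0 for k < 0 and D(k) := −φ₀⁻¹( j(k) + ∑_{μ=0}^∞ (φ_{μ+1} + ψ_μ ∘ nb)(D(k−1−μ)) ) for k ≥ 0 (a finite sum). Then z_out := w_out + D vanishes for negative arguments and the resulting total fields satisfy the perturbed model equations ∑_{μ=0}^∞ ( φ_μ(z^n(k−μ)) + ψ_μ(z^p(k−μ)) ) + j(k) = 0 for every k ≥ 0. -/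
lemma finsum_nat_succ' {M : Type*} [AddCommMonoid M] (f : ℕ → M)
    (hf : (Function.support f).Finite) : ∑ᶠ n, f n = f 0 + ∑ᶠ n, f (n + 1) := by
  set N := hf.toFinset.sup id + 1 with hN
  have hsub : Function.support f ⊆ ↑(Finset.range (N + 1)) := by
    intro x hx
    simp only [Finset.coe_range, Set.mem_Iio]
    have : x ∈ hf.toFinset := hf.mem_toFinset.2 hx
    have := Finset.le_sup (f := id) this; simp only [id] at this
    omega
  have hsub2 : (Function.support fun n => f (n + 1)) ⊆ ↑(Finset.range N) := by
    intro x hx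
    simp only [Finset.coe_range, Set.mem_Iio]
    have : x + 1 ∈ hf.toFinset := hf.mem_toFinset.2 hx
    have := Finset.le_sup (f := id) this; simp only [id] at this
    omega
  rw [finsum_eq_sum_of_support_subset f hsub,
    finsum_eq_sum_of_support_subset _ hsub2, Finset.sum_range_succ' f N]
  exact (add_comm _ _)

/-- **Corollary 3** (deflected processes): with `φ 0` a linear isomorphism
(realized by `e`), `w_out` the unique output vanishing for negative arguments
solving the unperturbed linear model equations for `z_in`, `j : ℕ → I` a
perturbation, and `D : ℤ → P` the deflection defined recursively by `D k = 0`
for `k < 0` and `D k = −φ₀⁻¹ (j k + ∑ᶠ μ, (φ (μ+1) + ψ μ ∘ nb) (D (k−1−μ)))`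
for `k ≥ 0`, the output `z_out := w_out + D` vanishes for negative arguments
and the resulting total fields satisfy the perturbed model equations for every
`k ≥ 0`. -/
theorem stmt_10
    {P I : Type*} [AddCommGroup P] [Module ℝ P] [AddCommGroup I] [Module ℝ I]
    (nb : P →ₗ[ℝ] P) (hnb : ∀ x, nb (nb x) = x)
    (φ ψ : ℕ → (P →ₗ[ℝ] I))
    (hφfin : {μ : ℕ | φ μ ≠ 0}.Finite) (hψfin : {μ : ℕ | ψ μ ≠ 0}.Finite)
    (e : P ≃ₗ[ℝ] I) (he : (e : P →ₗ[ℝ] I) = φ 0)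
    (z_in : ℤ → P) (hin : ∀ k : ℤ, k < 0 → z_in k = 0)
    (w_out : ℤ → P) (hwneg : ∀ k : ℤ, k < 0 → w_out k = 0)
    (hw : ∀ k : ℕ,
      (∑ᶠ μ : ℕ,
        (φ μ (z_in ((k : ℤ) - μ) + w_out ((k : ℤ) - μ)) +
          ψ μ (nb (z_in ((k : ℤ) - μ)) + nb (w_out ((k : ℤ) - μ - 1))))) = 0)
    (j : ℕ → I)
    (D : ℤ → P) (hDneg : ∀ k : ℤ, k < 0 → D k = 0)
    (hD : ∀ k : ℕ,
      D (k : ℤ) =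
        - e.symm (j k +
          ∑ᶠ μ : ℕ, (φ (μ + 1) + (ψ μ) ∘ₗ nb) (D ((k : ℤ) - 1 - μ)))) :
    (∀ k : ℤ, k < 0 → w_out k + D k = 0) ∧
    (∀ k : ℕ,
        (∑ᶠ μ : ℕ,
          (φ μ (z_in ((k : ℤ) - μ) + (w_out ((k : ℤ) - μ) + D ((k : ℤ) - μ))) +
            ψ μ (nb (z_in ((k : ℤ) - μ)) +
              nb (w_out ((k : ℤ) - μ - 1) + D ((k : ℤ) - μ - 1))))) +
          j k = 0) := by
  have hφfin' : {μ : ℕ | φ (μ + 1) ≠ 0}.Finite := by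
    have : Set.InjOn (fun n : ℕ => n + 1) ((fun n : ℕ => n + 1) ⁻¹' {μ | φ μ ≠ 0}) :=
      (add_left_injective 1).injOn
    exact hφfin.preimage this
  have hsuppφ : ∀ g : ℕ → P, (Function.support fun μ => φ μ (g μ)).Finite := by
    intro g
    apply hφfin.subset
    intro μ hμ
    simp only [Function.mem_support] at hμ
    simp only [Set.mem_setOf_eq]
    intro h0
    simp [h0] at hμ
  have hsuppφ' : ∀ g : ℕ → P, (Function.support fun μ => φ (μ + 1) (g μ)).Finite := by
    intro g
    apply hφfin'.subset
    intro μ hμ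
    simp only [Function.mem_support] at hμ
    simp only [Set.mem_setOf_eq]
    intro h0
    simp [h0] at hμ
  have hsuppψ : ∀ g : ℕ → P, (Function.support fun μ => ψ μ (g μ)).Finite := by
    intro g
    apply hψfin.subset
    intro μ hμ
    simp only [Function.mem_support] at hμ
    simp only [Set.mem_setOf_eq]
    intro h0
    simp [h0] at hμ
  refine ⟨fun k hk => by rw [hwneg k hk, hDneg k hk, add_zero], fun k => ?_⟩
  have hidx : ∀ μ : ℕ, (k : ℤ) - μ - 1 = (k : ℤ) - 1 - μ := fun μ => sub_right_comm _ _ _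
  have hstep : ∀ μ : ℕ,
      φ μ (z_in ((k:ℤ)-μ) + (w_out ((k:ℤ)-μ) + D ((k:ℤ)-μ))) +
        ψ μ (nb (z_in ((k:ℤ)-μ)) + nb (w_out ((k:ℤ)-μ-1) + D ((k:ℤ)-μ-1)))
      = (fun μ : ℕ => (φ μ (z_in ((k:ℤ)-μ) + w_out ((k:ℤ)-μ)) +
          ψ μ (nb (z_in ((k:ℤ)-μ)) + nb (w_out ((k:ℤ)-μ-1))))) μ
        + (fun μ : ℕ => (φ μ (D ((k:ℤ)-μ)) + ψ μ (nb (D ((k:ℤ)-μ-1))))) μ := by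
    intro μ; simp only [map_add]; abel
  have hA : (Function.support fun μ : ℕ => (φ μ (z_in ((k:ℤ)-μ) + w_out ((k:ℤ)-μ)) +
      ψ μ (nb (z_in ((k:ℤ)-μ)) + nb (w_out ((k:ℤ)-μ-1))))).Finite :=
    ((hsuppφ _).union (hsuppψ _)).subset (Function.support_add _ _)
  have hB : (Function.support fun μ : ℕ => (φ μ (D ((k:ℤ)-μ)) +
      ψ μ (nb (D ((k:ℤ)-μ-1))))).Finite :=
    ((hsuppφ _).union (hsuppψ _)).subset (Function.support_add _ _)
  rw [finsum_congr hstep, finsum_add_distrib hA hB, hw k, zero_add]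
  -- split B-sum
  rw [finsum_add_distrib (hsuppφ fun μ => D ((k:ℤ)-μ)) (hsuppψ fun μ => nb (D ((k:ℤ)-μ-1)))]
  rw [finsum_nat_succ' _ (hsuppφ fun μ => D ((k:ℤ)-μ))]
  have h1 : (∑ᶠ μ : ℕ, φ (μ + 1) (D ((k:ℤ) - ↑(μ + 1)))) =
      ∑ᶠ μ : ℕ, φ (μ + 1) (D ((k:ℤ) - 1 - μ)) := by
    apply finsum_congr
    intro μ
    congr 1
    push_cast
    ring_nf
  have h2 : (∑ᶠ μ : ℕ, ψ μ (nb (D ((k:ℤ) - μ - 1)))) =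
      ∑ᶠ μ : ℕ, ((ψ μ) ∘ₗ nb) (D ((k:ℤ) - 1 - μ)) := by
    apply finsum_congr
    intro μ
    rw [hidx μ]
    rfl
  rw [h1, h2]
  have hS : (∑ᶠ μ : ℕ, φ (μ + 1) (D ((k:ℤ) - 1 - μ))) +
      (∑ᶠ μ : ℕ, ((ψ μ) ∘ₗ nb) (D ((k:ℤ) - 1 - μ))) =
      ∑ᶠ μ : ℕ, (φ (μ + 1) + (ψ μ) ∘ₗ nb) (D ((k:ℤ) - 1 - μ)) := by
    have step1 : (∑ᶠ μ : ℕ, (φ (μ + 1) + (ψ μ) ∘ₗ nb) (D ((k:ℤ) - 1 - μ))) =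
        ∑ᶠ μ : ℕ, (φ (μ + 1) (D ((k:ℤ) - 1 - μ)) + ((ψ μ) ∘ₗ nb) (D ((k:ℤ) - 1 - μ))) :=
      finsum_congr fun μ => rfl
    have step2 := finsum_add_distrib (M := I)
      (f := fun μ : ℕ => φ (μ + 1) (D ((k:ℤ) - 1 - μ)))
      (g := fun μ : ℕ => ((ψ μ) ∘ₗ nb) (D ((k:ℤ) - 1 - μ)))
      (hsuppφ' fun μ => D ((k:ℤ)-1-μ)) (hsuppψ fun μ => nb (D ((k:ℤ)-1-μ)))
    rw [step1, step2]
  have hcast : ((0 : ℕ) : ℤ) = 0 := rfl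
  have he0 : φ 0 (D ((k:ℤ) - ((0:ℕ):ℤ))) =
      -(j k + ∑ᶠ μ : ℕ, (φ (μ + 1) + (ψ μ) ∘ₗ nb) (D ((k:ℤ) - 1 - μ))) := by
    rw [← he]
    show e (D ((k:ℤ) - ((0:ℕ):ℤ))) = _
    rw [hcast, sub_zero, hD k]
    simp
  rw [he0, ← hS]
  abel
end
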